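/- Let V be a nonempty finite type with n = Fintype.card V, let r ≥ 1, and let E : Fin (r·n) → Sym2 V be a decodable multigraph on V with m = r·n edges. Then m(G) ≤ 2r − 1, where m(G) is the minimum cardinality of a loop cut of G. -/

import Mathlib

/-- `e` is a loop index at vertex `v`. -/
def IsLoopIdx {V : Type*} {m : ℕ} (E : Fin m → Sym2 V) (v : V) (e : Fin m) : Prop :=
  E e = Sym2.diag v

/-- `u` and `v` are connected in the multigraph `E` with the edge indices in `S` deleted. -/
def ConnectedMod {V : Type*} {m : ℕ} (E : Fin m → Sym2 V) (S : Finset (Fin m))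
    (u v : V) : Prop :=
  Relation.EqvGen (fun a b => ∃ e : Fin m, e ∉ S ∧ E e = s(a, b)) u v

/-- `G − S` is decodable: every vertex is connected in `G − S` to a vertex with a loop
outside `S`. -/
def DecodableMod {V : Type*} {m : ℕ} (E : Fin m → Sym2 V) (S : Finset (Fin m)) : Prop :=
  ∀ u : V, ∃ v : V, (∃ e : Fin m, e ∉ S ∧ IsLoopIdx E v e) ∧ ConnectedMod E S u v

def IsDecodable {V : Type*} {m : ℕ} (E : Fin m → Sym2 V) : Prop :=
  DecodableMod E ∅

/-- `c_x^G`: the number of `x`-element sets of edge indices whose deletion leaves a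
decodable graph. -/
noncomputable def cG {V : Type*} {m : ℕ} (E : Fin m → Sym2 V) (x : ℕ) : ℕ :=
  Set.ncard {S : Finset (Fin m) | S.card = x ∧ DecodableMod E S}

/-- `k_x^G = C(m,x) − c_x^G`. -/
noncomputable def kG {V : Type*} {m : ℕ} (E : Fin m → Sym2 V) (x : ℕ) : ℕ :=
  Nat.choose m x - cG E x

/-- `m(G)`: the minimum cardinality of a loop cut. -/
noncomputable def mCut {V : Type*} {m : ℕ} (E : Fin m → Sym2 V) : ℕ :=
  sInf {k : ℕ | ∃ S : Finset (Fin m), S.card = k ∧ ¬ DecodableMod E S}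

/-- incidence degree of `v` (a loop at `v` counts once). -/
noncomputable def dI {V : Type*} {m : ℕ} (E : Fin m → Sym2 V) (v : V) : ℕ :=
  Set.ncard {e : Fin m | v ∈ E e}

/-- `δ_I(G)`: the minimum incidence degree. -/
noncomputable def deltaI {V : Type*} {m : ℕ} (E : Fin m → Sym2 V) : ℕ :=
  sInf (Set.range (dI E))

/-- `L_G`: the number of loop indices. -/
noncomputable def LG {V : Type*} {m : ℕ} (E : Fin m → Sym2 V) : ℕ :=
  Set.ncard {e : Fin m | ∃ v : V, E e = Sym2.diag v}

/-- `δ_ℓ(v)`: the number of loop indices at `v`. -/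
noncomputable def loopsAt {V : Type*} {m : ℕ} (E : Fin m → Sym2 V) (v : V) : ℕ :=
  Set.ncard {e : Fin m | E e = Sym2.diag v}

/-- `Δ_ℓ(G)`: the maximum number of loops at a single vertex. -/
noncomputable def DeltaLoops {V : Type*} {m : ℕ} (E : Fin m → Sym2 V) : ℕ :=
  sSup (Set.range (loopsAt E))

/-- `κ_G`: the edge connectivity. -/
noncomputable def kappaG {V : Type*} {m : ℕ} (E : Fin m → Sym2 V) : ℕ :=
  sInf {k : ℕ | ∃ S : Finset (Fin m), S.card = k ∧ ∃ u v : V, ¬ ConnectedMod E S u v}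

/-!
Deleting all edges incident to a vertex `v` isolates `v` without a loop, so `m(G)` is at most
the incidence degree of `v`. Each edge is incident to at most two vertices and a loop to only
one; a decodable graph has a loop, so the incidence degrees sum to less than `2m = 2rn`, and
some vertex has incidence degree below `2r`.
-/

open Finset

section IncidentEdges

variable {V : Type*} {m : ℕ} (E : Fin m → Sym2 V)

open Classical in
noncomputable def incidentIdx (v : V) : Finset (Fin m) := {e | v ∈ E e}

theorem mem_incidentIdx {v : V} {e : Fin m} : e ∈ incidentIdx E v ↔ v ∈ E e := by
  simp [incidentIdx]

theorem dI_eq_card_incidentIdx (v : V) : dI E v = #(incidentIdx E v) := by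
  rw [dI, ← Set.ncard_coe_finset]
  congr 1
  ext e
  simp [mem_incidentIdx]

theorem ConnectedMod.eq_iff_of_incidentIdx {v a b : V}
    (h : ConnectedMod E (incidentIdx E v) a b) : a = v ↔ b = v := by
  induction h with
  | rel a b hab =>
    obtain ⟨e, he, hE⟩ := hab
    rw [mem_incidentIdx, hE] at he
    constructor <;> rintro rfl <;> simp at he
  | refl => rfl
  | symm _ _ _ ih => exact ih.symm
  | trans _ _ _ _ _ ih₁ ih₂ => exact ih₁.trans ih₂

theorem not_decodableMod_incidentIdx (v : V) : ¬ DecodableMod E (incidentIdx E v) := by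
  intro hdec
  obtain ⟨w, ⟨e, he, hloop⟩, hconn⟩ := hdec v
  obtain rfl : w = v := (hconn.eq_iff_of_incidentIdx E).mp rfl
  rw [mem_incidentIdx, show E e = Sym2.diag w from hloop] at he
  exact he (Sym2.mem_mk_left w w)

theorem mCut_le_dI (v : V) : mCut E ≤ dI E v := by
  rw [dI_eq_card_incidentIdx]
  exact Nat.sInf_le ⟨_, rfl, not_decodableMod_incidentIdx E v⟩

theorem sum_dI_eq_sum_card_toFinset [Fintype V] [DecidableEq V] :
    ∑ v, dI E v = ∑ e, #(E e).toFinset := by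
  simp_rw [dI_eq_card_incidentIdx]
  have hdouble := sum_card_bipartiteAbove_eq_sum_card_bipartiteBelow
    (s := (univ : Finset V)) (t := (univ : Finset (Fin m))) (r := fun v e => v ∈ E e)
  convert hdouble using 3 with v _ e
  · ext e; simp [mem_incidentIdx, bipartiteAbove]
  · ext v; simp [bipartiteBelow, Sym2.mem_toFinset]

theorem sum_dI_lt_of_isLoopIdx [Fintype V] {w : V} {e₀ : Fin m} (hloop : IsLoopIdx E w e₀) :
    ∑ v, dI E v < 2 * m := by
  classical
  rw [sum_dI_eq_sum_card_toFinset]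
  calc ∑ e, #(E e).toFinset < ∑ _e : Fin m, 2 := by
        refine sum_lt_sum (fun e _ => ?_) ⟨e₀, mem_univ _, ?_⟩
        · rw [Sym2.card_toFinset]; split_ifs <;> simp
        · rw [show E e₀ = Sym2.diag w from hloop]
          simp [Sym2.card_toFinset_of_isDiag _ (Sym2.diag_isDiag w)]
    _ = 2 * m := by simp [mul_comm]

end IncidentEdges

theorem stmt7_general {V : Type*} [Fintype V] [Nonempty V] {r : ℕ}
    (E : Fin (r * Fintype.card V) → Sym2 V) (hdec : IsDecodable E) :
    mCut E ≤ 2 * r - 1 := by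
  obtain ⟨u⟩ := ‹Nonempty V›
  obtain ⟨_, ⟨_, -, hloop⟩, -⟩ := hdec u
  have hsum : ∑ v, dI E v < ∑ _v : V, 2 * r := by
    calc ∑ v, dI E v < 2 * (r * Fintype.card V) := sum_dI_lt_of_isLoopIdx E hloop
      _ = ∑ _v : V, 2 * r := by rw [sum_const, card_univ, smul_eq_mul]; ring
  obtain ⟨v, -, hv⟩ := exists_lt_of_sum_lt hsum
  have hcut := mCut_le_dI E v
  omega

theorem stmt7 {V : Type*} [Fintype V] [Nonempty V] {r : ℕ} (hr : 1 ≤ r)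
    (E : Fin (r * Fintype.card V) → Sym2 V) (hdec : IsDecodable E) :
    mCut E ≤ 2 * r - 1 :=
  stmt7_general E hdec
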